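/- Fix a real number λ, a nonnegative integer r, and sequences of real numbers (a_n)_{n≥0} and (b_n)_{n≥0}. If b_n = Σ_{k=0}^{n} {n+r, k+r}_{r,λ} a_k holds for every n ≥ 0, then a_n = Σ_{k=0}^{n} (−1)^{n−k} [n+r, k+r]_{r,λ} b_k holds for every n ≥ 0. -/

import Mathlib

/-!
Substituting `x ↦ -x - r` in the defining identity of `[n+r, k+r]_{r,λ}` turns rising factorials
into signed falling ones, so `(x)_n = ∑ₖ (-1)^(n-k) [n+r, k+r]_{r,λ} (x+r)_{k,λ}`. Expanding each
`(x+r)_{k,λ}` by the defining identity of `{k+r, m+r}_{r,λ}` writes `(x)_n` as a combination of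
`(x)_0, …, (x)_n`; evaluating at `x = 0, 1, …, n`, where `(j)_m = j!/(j-m)!` vanishes for `m > j`,
forces its coefficients to be `δ_{mn}`. Hence the signed first-kind matrix times the second-kind
matrix is the identity, which is exactly the inverse relation.
-/

open Finset

/-- The degenerate falling factorial `(x)_{n,λ} = x(x-λ)(x-2λ)⋯(x-(n-1)λ)`. -/
noncomputable def degFall (lam x : ℝ) (n : ℕ) : ℝ := ∏ i ∈ Finset.range n, (x - i * lam)

/-- The degenerate rising factorial `⟨x⟩_{n,λ} = x(x+λ)(x+2λ)⋯(x+(n-1)λ)`. -/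
noncomputable def degRise (lam x : ℝ) (n : ℕ) : ℝ := ∏ i ∈ Finset.range n, (x + i * lam)

lemma degRise_neg (lam x : ℝ) (k : ℕ) : degRise lam (-x) k = (-1) ^ k * degFall lam x k := by
  calc ∏ i ∈ range k, (-x + i * lam) = ∏ i ∈ range k, (-1) * (x - i * lam) :=
        prod_congr rfl fun i _ => by ring
    _ = (-1) ^ k * degFall lam x k := by rw [prod_mul_distrib, prod_const, card_range, degFall]

lemma degFall_one_natCast (j m : ℕ) : degFall 1 (j : ℝ) m = j.descFactorial m := by
  rw [← descPochhammer_eval_eq_descFactorial, descPochhammer_eval_eq_prod_range, degFall]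
  simp only [mul_one]

lemma neg_one_pow_sub_eq_mul {R : Type*} [Ring R] {k n : ℕ} (h : k ≤ n) :
    (-1 : R) ^ (n - k) = (-1) ^ n * (-1) ^ k := by
  rw [← pow_sub_mul_pow (-1 : R) h, mul_assoc, ← pow_add, ← two_mul, pow_mul, neg_one_sq, one_pow,
    mul_one]

lemma sum_range_mul_sum_range_succ_comm {R : Type*} [CommSemiring R] (n : ℕ) (A : ℕ → R)
    (B : ℕ → ℕ → R) (v : ℕ → R) :
    ∑ k ∈ range (n + 1), A k * ∑ m ∈ range (k + 1), B k m * v m =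
      ∑ m ∈ range (n + 1), (∑ k ∈ Icc m n, A k * B k m) * v m := by
  simp only [mul_sum, sum_mul, mul_assoc]
  exact sum_comm' fun k m => by simp only [mem_range, mem_Icc]; omega

lemma eq_zero_of_sum_mul_descFactorial_eq_zero {R : Type*} [Semiring R] [NoZeroDivisors R]
    [CharZero R] {n : ℕ} {d : ℕ → R}
    (h : ∀ j ≤ n, ∑ m ∈ range (n + 1), d m * (j.descFactorial m : R) = 0) :
    ∀ m ≤ n, d m = 0 := by
  intro m
  induction m using Nat.strong_induction_on with
  | _ m ih =>
    intro hm
    have hsum := h m hm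
    rw [sum_eq_single m] at hsum
    · simpa [Nat.descFactorial_self, Nat.factorial_ne_zero] using hsum
    · intro i _ hne
      rcases lt_or_gt_of_ne hne with hlt | hgt
      · rw [ih i hlt (by omega), zero_mul]
      · rw [Nat.descFactorial_eq_zero_iff_lt.2 hgt, Nat.cast_zero, mul_zero]
    · intro hm'
      exact absurd (mem_range.2 (Nat.lt_succ_of_le hm)) hm'

lemma coeff_eq_ite_of_degFall_one_eq_sum {n : ℕ} {c : ℕ → ℝ}
    (h : ∀ x : ℝ, degFall 1 x n = ∑ m ∈ range (n + 1), c m * degFall 1 x m) :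
    ∀ m ≤ n, c m = if m = n then 1 else 0 := by
  have hzero := eq_zero_of_sum_mul_descFactorial_eq_zero
    (n := n) (d := fun m => c m - if m = n then 1 else 0) fun j _ => by
      simp only [sub_mul, sum_sub_distrib, ite_mul, one_mul, zero_mul, sum_ite_eq',
        mem_range, lt_add_one, if_true, ← degFall_one_natCast, ← h, sub_self]
  exact fun m hm => sub_eq_zero.1 (hzero m hm)

lemma degFall_one_eq_sum_of_degRise_one_eq_sum {lam r : ℝ} {n : ℕ} {s : ℕ → ℝ}
    (h : ∀ x : ℝ, degRise 1 (x + r) n = ∑ k ∈ range (n + 1), s k * degRise lam x k) (x : ℝ) :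
    degFall 1 x n = ∑ k ∈ range (n + 1), (-1) ^ (n - k) * s k * degFall lam (x + r) k := by
  have hx := h (-(x + r))
  rw [show -(x + r) + r = -x by ring, degRise_neg] at hx
  calc degFall 1 x n = (-1) ^ n * ((-1) ^ n * degFall 1 x n) := by
        rw [← mul_assoc, ← mul_pow, neg_one_mul, neg_neg, one_pow, one_mul]
    _ = ∑ k ∈ range (n + 1), (-1) ^ n * (s k * ((-1) ^ k * degFall lam (x + r) k)) := by
        simp only [hx, degRise_neg, mul_sum]
    _ = ∑ k ∈ range (n + 1), (-1) ^ (n - k) * s k * degFall lam (x + r) k :=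
        sum_congr rfl fun k hk => by
          rw [neg_one_pow_sub_eq_mul (Nat.lt_succ_iff.1 (mem_range.1 hk))]; ring

/-- Inverse relation (backward direction): if
`b_n = ∑_{k=0}^{n} {n+r,k+r}_{r,λ} a_k` for all `n`, then
`a_n = ∑_{k=0}^{n} (−1)^{n−k} [n+r,k+r]_{r,λ} b_k` for all `n`. -/
theorem inverse_relation_backward (lam : ℝ) (r : ℕ) (S1 S2 : ℕ → ℕ → ℝ)
    (hS1 : ∀ (n : ℕ) (x : ℝ),
      degRise 1 (x + r) n = ∑ k ∈ range (n + 1), S1 n k * degRise lam x k)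
    (hS2 : ∀ (n : ℕ) (x : ℝ),
      degFall lam (x + r) n = ∑ k ∈ range (n + 1), S2 n k * degFall 1 x k)
    (a b : ℕ → ℝ)
    (hba : ∀ n : ℕ, b n = ∑ k ∈ range (n + 1), S2 n k * a k) :
    ∀ n : ℕ, a n = ∑ k ∈ range (n + 1), (-1 : ℝ) ^ (n - k) * S1 n k * b k := by
  intro n
  have hid : ∀ m ≤ n, ∑ k ∈ Icc m n, (-1 : ℝ) ^ (n - k) * S1 n k * S2 k m =
      if m = n then 1 else 0 := by
    refine coeff_eq_ite_of_degFall_one_eq_sum fun x => ?_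
    rw [degFall_one_eq_sum_of_degRise_one_eq_sum (hS1 n) x, ← sum_range_mul_sum_range_succ_comm]
    simp only [hS2]
  calc a n = ∑ m ∈ range (n + 1), (if m = n then 1 else 0) * a m := by simp
    _ = ∑ m ∈ range (n + 1), (∑ k ∈ Icc m n, (-1 : ℝ) ^ (n - k) * S1 n k * S2 k m) * a m :=
        sum_congr rfl fun m hm => by rw [hid m (Nat.lt_succ_iff.1 (mem_range.1 hm))]
    _ = ∑ k ∈ range (n + 1), (-1 : ℝ) ^ (n - k) * S1 n k * b k := by
        rw [← sum_range_mul_sum_range_succ_comm]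
        simp only [hba]
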